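/- arXiv:2505.05084 — 4 statements merged into one kernel-verified Lean document; each statement's English description precedes it below -/
import Mathlib

section
/- Let X_1, ..., X_n, X_{n+1} be exchangeable real-valued random variables (nonconformity scores) and let α ∈ (0,1) with ⌈(n+1)(1-α)⌉ ≤ n. Define q̂ as the ⌈(n+1)(1-α)⌉-th smallest value among X_1, ..., X_n. Then P(X_{n+1} ≤ q̂) ≥ 1 - α. -/
/-!
Let `R j` be the number of scores strictly below `X j` and `k = ⌈(n+1)(1-α)⌉`. In every outcome at
least `k` indices have `R j < k`: an index of smallest score among those with `R j ≥ k` has `k`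
indices strictly below it, and none of them can have `R ≥ k`. By exchangeability the events
`R j < k` are equally likely, so `(n+1) P(R (n+1) < k) ≥ k ≥ (n+1)(1-α)`, and `R (n+1) < k` forces
`X (n+1) ≤ q̂`.
-/

open MeasureTheory

/-- The `j`-th smallest value (1-indexed) among `f 0, ..., f (n-1)`. -/
noncomputable def orderStat {n : ℕ} (f : Fin n → ℝ) (j : ℕ) : ℝ :=
  ((Multiset.map f Finset.univ.val).sort (· ≤ ·)).getD (j - 1) 0

/-- Exchangeability: the joint law is invariant under permutation of the indices. -/
def Exchangeable {Ω : Type*} [MeasurableSpace Ω] (μ : Measure Ω) {n : ℕ}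
    (X : Fin n → Ω → ℝ) : Prop :=
  ∀ σ : Equiv.Perm (Fin n),
    Measure.map (fun ω i => X (σ i) ω) μ = Measure.map (fun ω i => X i ω) μ

open Finset
open scoped ENNReal

theorem List.SortedLE.le_getElem_of_countP_le {α : Type*} [LinearOrder α] {l : List α}
    (hl : l.SortedLE) {j : ℕ} (hj : j < l.length) {x : α} (h : l.countP (· < x) ≤ j) :
    x ≤ l[j] := by
  by_contra! hx
  have hprefix : (l.take (j + 1)).countP (· < x) = j + 1 := by
    rw [List.countP_eq_length.2, List.length_take, min_eq_left hj]
    intro a ha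
    obtain ⟨i, hi, rfl⟩ := List.mem_iff_getElem.1 ha
    simp only [List.length_take] at hi
    simp only [List.getElem_take, decide_eq_true_eq]
    exact (hl.getElem_le_getElem_of_le (by omega)).trans_lt hx
  have := (List.take_sublist (j + 1) l).countP_le (p := (· < x))
  omega

section Rank

variable {ι κ α : Type*} [Fintype ι] [Fintype κ] [LinearOrder α]

def numBelow (v : ι → α) (x : α) : ℕ := #{i | v i < x}

theorem numBelow_comp_le (v : ι → α) {f : κ → ι} (hf : f.Injective) (x : α) :
    numBelow (v ∘ f) x ≤ numBelow v x :=
  card_le_card_of_injOn f (fun i hi => by simpa using hi) hf.injOn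

theorem numBelow_comp_equiv (v : ι → α) (σ : ι ≃ ι) (x : α) :
    numBelow (v ∘ σ) x = numBelow v x := by
  simp only [numBelow, card_filter, Function.comp_apply]
  exact σ.sum_comp (fun i => if v i < x then 1 else 0)

theorem le_card_numBelow_lt (v : ι → α) {k : ℕ} (hk : k ≤ Fintype.card ι) :
    k ≤ #{j | numBelow v (v j) < k} := by
  by_cases hT : ∃ j, k ≤ numBelow v (v j)
  · obtain ⟨j, hj⟩ := hT
    obtain ⟨j₀, hj₀, hmin⟩ := exists_min_image ({j | k ≤ numBelow v (v j)} : Finset ι) v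
      ⟨j, by simpa using hj⟩
    have hbelow : ({i | v i < v j₀} : Finset ι) ⊆ ({j | numBelow v (v j) < k} : Finset ι) := by
      intro i hi
      simp only [mem_filter, mem_univ, true_and] at hi ⊢
      by_contra! hik
      exact hi.not_ge (hmin i (by simpa using hik))
    exact (mem_filter.1 hj₀).2.trans (card_le_card hbelow)
  · push Not at hT
    simpa [hT] using hk

end Rank

theorem le_orderStat_of_numBelow_lt {n : ℕ} (f : Fin n → ℝ) {j : ℕ} (hj : j ≤ n) {x : ℝ}
    (h : numBelow f x < j) : x ≤ orderStat f j := by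
  have hcount (l : List ℝ) (hl : (l : Multiset ℝ) = Multiset.map f univ.val) :
      l.countP (· < x) = numBelow f x := by
    rw [← Multiset.coe_countP, hl, Multiset.countP_map]
    rfl
  have hj' : j - 1 < n := by omega
  rw [orderStat, List.getD_eq_getElem _ _ (by simpa using hj')]
  refine (List.sortedLE_iff_pairwise.2 (Multiset.pairwise_sort _ _)).le_getElem_of_countP_le _ ?_
  rw [hcount _ (Multiset.sort_eq _ _)]
  omega

theorem ENNReal.ofReal_le_natCeil_mul_div {m : ℕ} (hm : m ≠ 0) (p : ℝ) :
    ENNReal.ofReal p ≤ (⌈(m : ℝ) * p⌉₊ : ℝ≥0∞) / m := by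
  rw [ENNReal.le_div_iff_mul_le (Or.inl (by exact_mod_cast hm))
      (Or.inl (ENNReal.natCast_ne_top m)), ← ENNReal.ofReal_natCast m,
    ← ENNReal.ofReal_mul' (Nat.cast_nonneg m),
    ← ENNReal.ofReal_natCast ⌈(m : ℝ) * p⌉₊, mul_comm]
  exact ENNReal.ofReal_le_ofReal (Nat.le_ceil _)

theorem measurableSet_numBelow_lt {ι : Type*} [Fintype ι] (j : ι) (k : ℕ) :
    MeasurableSet {v : ι → ℝ | numBelow v (v j) < k} := by
  have : Measurable fun v : ι → ℝ => numBelow v (v j) := by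
    simp only [numBelow, card_filter]
    exact Finset.measurable_sum _ fun i _ => Measurable.ite
      (measurableSet_lt (measurable_pi_apply i) (measurable_pi_apply j)) measurable_const
      measurable_const
  exact this measurableSet_Iio

theorem MeasureTheory.natCast_le_sum_measure {Ω ι : Type*} [MeasurableSpace Ω] [Fintype ι]
    {μ : Measure Ω} [IsProbabilityMeasure μ] {A : ι → Set Ω} [∀ ω, DecidablePred (ω ∈ A ·)]
    (hA : ∀ i, MeasurableSet (A i)) {k : ℕ} (hk : ∀ ω, k ≤ #{i | ω ∈ A i}) :
    (k : ℝ≥0∞) ≤ ∑ i, μ (A i) :=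
  calc (k : ℝ≥0∞) = ∫⁻ _, (k : ℝ≥0∞) ∂μ := by simp
    _ ≤ ∫⁻ ω, ∑ i, (A i).indicator 1 ω ∂μ := lintegral_mono fun ω => by
      simpa [Set.indicator_apply, Finset.sum_boole] using hk ω
    _ = ∑ i, μ (A i) := by
      rw [lintegral_finsetSum _ fun i _ => measurable_one.indicator (hA i)]
      simp only [lintegral_indicator_one (hA _)]

section Exchangeable

variable {Ω : Type*} [MeasurableSpace Ω] {μ : Measure Ω} {m : ℕ} {X : Fin m → Ω → ℝ}

theorem Exchangeable.measure_preimage_perm (hX : Exchangeable μ X)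
    (hmeas : ∀ i, Measurable (X i)) (σ : Equiv.Perm (Fin m)) {B : Set (Fin m → ℝ)}
    (hB : MeasurableSet B) :
    μ ((fun ω i => X (σ i) ω) ⁻¹' B) = μ ((fun ω i => X i ω) ⁻¹' B) := by
  have hY : Measurable fun ω i => X i ω := measurable_pi_lambda _ hmeas
  have hYσ : Measurable fun ω i => X (σ i) ω := measurable_pi_lambda _ fun i => hmeas (σ i)
  rw [← Measure.map_apply hYσ hB, hX σ, Measure.map_apply hY hB]

theorem Exchangeable.measure_numBelow_lt_eq (hX : Exchangeable μ X)
    (hmeas : ∀ i, Measurable (X i)) (k : ℕ) (j j' : Fin m) :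
    μ {ω | numBelow (X · ω) (X j ω) < k} = μ {ω | numBelow (X · ω) (X j' ω) < k} := by
  have h := hX.measure_preimage_perm hmeas (Equiv.swap j j') (measurableSet_numBelow_lt j' k)
  refine (congrArg μ (Set.ext fun ω => ?_)).trans h
  show _ < k ↔ numBelow ((X · ω) ∘ Equiv.swap j j') (X (Equiv.swap j j' j') ω) < k
  rw [numBelow_comp_equiv, Equiv.swap_apply_right]

theorem Exchangeable.natCast_div_le_measure_numBelow_lt [IsProbabilityMeasure μ]
    (hX : Exchangeable μ X) (hmeas : ∀ i, Measurable (X i)) {k : ℕ} (hk : k ≤ m) (j : Fin m) :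
    (k : ℝ≥0∞) / m ≤ μ {ω | numBelow (X · ω) (X j ω) < k} := by
  have hsum : (k : ℝ≥0∞) ≤ ∑ i, μ {ω | numBelow (X · ω) (X i ω) < k} :=
    natCast_le_sum_measure (A := fun i => {ω | numBelow (X · ω) (X i ω) < k})
      (fun i => measurableSet_numBelow_lt i k |>.preimage (measurable_pi_lambda _ hmeas))
      (fun ω => le_card_numBelow_lt (X · ω) (by simpa using hk))
  rw [sum_congr rfl fun i _ => hX.measure_numBelow_lt_eq hmeas k i j, sum_const, card_univ,
    Fintype.card_fin, nsmul_eq_mul] at hsum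
  exact ENNReal.div_le_of_le_mul' hsum

end Exchangeable

theorem conformal_coverage_general
    {Ω : Type*} [MeasurableSpace Ω] (μ : Measure Ω) [IsProbabilityMeasure μ]
    {n : ℕ} (X : Fin (n + 1) → Ω → ℝ) (hmeas : ∀ i, Measurable (X i))
    (hexch : Exchangeable μ X)
    (α : ℝ)
    (hidx : ⌈((n : ℝ) + 1) * (1 - α)⌉₊ ≤ n) :
    μ {ω | X (Fin.last n) ω ≤
        orderStat (fun i : Fin n => X i.castSucc ω) ⌈((n : ℝ) + 1) * (1 - α)⌉₊} ≥
      ENNReal.ofReal (1 - α) := by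
  set k := ⌈((n : ℝ) + 1) * (1 - α)⌉₊
  have hrank : (k : ℝ≥0∞) / (n + 1 : ℕ) ≤ μ {ω | numBelow (X · ω) (X (Fin.last n) ω) < k} :=
    hexch.natCast_div_le_measure_numBelow_lt hmeas (by omega) _
  have hsub : {ω | numBelow (X · ω) (X (Fin.last n) ω) < k} ⊆
      {ω | X (Fin.last n) ω ≤ orderStat (fun i : Fin n => X i.castSucc ω) k} :=
    fun ω hω => le_orderStat_of_numBelow_lt _ hidx
      ((numBelow_comp_le (X · ω) (Fin.castSucc_injective n) _).trans_lt hω)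
  calc ENNReal.ofReal (1 - α) ≤ k / (n + 1 : ℕ) := by
        simpa using ENNReal.ofReal_le_natCeil_mul_div n.succ_ne_zero (1 - α)
    _ ≤ _ := hrank.trans (measure_mono hsub)

/-- Conformal coverage guarantee. -/
theorem conformal_coverage
    {Ω : Type*} [MeasurableSpace Ω] (μ : Measure Ω) [IsProbabilityMeasure μ]
    {n : ℕ} (X : Fin (n + 1) → Ω → ℝ) (hmeas : ∀ i, Measurable (X i))
    (hexch : Exchangeable μ X)
    (α : ℝ) (hα : α ∈ Set.Ioo (0 : ℝ) 1)
    (hidx : ⌈((n : ℝ) + 1) * (1 - α)⌉₊ ≤ n) :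
    μ {ω | X (Fin.last n) ω ≤
        orderStat (fun i : Fin n => X i.castSucc ω) ⌈((n : ℝ) + 1) * (1 - α)⌉₊} ≥
      ENNReal.ofReal (1 - α) :=
  conformal_coverage_general μ X hmeas hexch α hidx
end

section
/- Let X_1, ..., X_{n+1} be exchangeable random variables with almost surely distinct values. For the rank R of X_{n+1} among X_1, ..., X_{n+1}, we have P(R = k) = 1/(n+1) for each k ∈ {1, ..., n+1}; i.e., the rank of the test score among calibration-plus-test scores is uniformly distributed. -/
open MeasureTheory
open scoped ENNReal

section RankAux

variable {Ω : Type*} [MeasurableSpace Ω] {n : ℕ}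

lemma card_filter_perm {α : Type*} [Fintype α] [DecidableEq α] (σ : Equiv.Perm α)
    (P : α → Prop) [DecidablePred P] :
    (Finset.univ.filter (fun i => P (σ i))).card = (Finset.univ.filter P).card := by
  apply Finset.card_bij (fun i _ => σ i)
  · intro a ha
    simp only [Finset.mem_filter, Finset.mem_univ, true_and] at ha ⊢
    exact ha
  · intro a _ b _ h
    exact σ.injective h
  · intro b hb
    refine ⟨σ.symm b, ?_, by simp⟩
    simp only [Finset.mem_filter, Finset.mem_univ, true_and] at hb ⊢
    simpa using hb

/-- The rank of `X j ω` among `X 1 ω, ..., X (n+1) ω`. -/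
noncomputable def rnk (X : Fin (n + 1) → Ω → ℝ) (j : Fin (n + 1)) (ω : Ω) : ℕ :=
  (Finset.univ.filter (fun i : Fin (n + 1) => X i ω ≤ X j ω)).card

omit [MeasurableSpace Ω] in
lemma rnk_mem (X : Fin (n + 1) → Ω → ℝ) (j : Fin (n + 1)) (ω : Ω) :
    rnk X j ω ∈ Finset.Icc 1 (n + 1) := by
  rw [Finset.mem_Icc]
  constructor
  · have hj : j ∈ Finset.univ.filter (fun i : Fin (n + 1) => X i ω ≤ X j ω) := by
      simp
    exact Finset.card_pos.mpr ⟨j, hj⟩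
  · calc (Finset.univ.filter (fun i : Fin (n + 1) => X i ω ≤ X j ω)).card
        ≤ (Finset.univ : Finset (Fin (n + 1))).card := Finset.card_filter_le _ _
    _ = n + 1 := by simp

omit [MeasurableSpace Ω] in
lemma rnk_inj (X : Fin (n + 1) → Ω → ℝ) (ω : Ω)
    (h : Function.Injective (fun i => X i ω)) :
    Function.Injective (fun j => rnk X j ω) := by
  have key : ∀ a b : Fin (n + 1), X a ω < X b ω → rnk X a ω < rnk X b ω := by
    intro a b hab
    apply Finset.card_lt_card
    constructor
    · intro i hi
      simp only [Finset.mem_filter, Finset.mem_univ, true_and] at hi ⊢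
      exact hi.trans hab.le
    · intro hsub
      have hb : b ∈ Finset.univ.filter (fun i : Fin (n + 1) => X i ω ≤ X b ω) := by
        simp
      have := hsub hb
      simp only [Finset.mem_filter, Finset.mem_univ, true_and] at this
      exact absurd this (not_le.mpr hab)
  intro a b hab
  by_contra hne
  have hXne : X a ω ≠ X b ω := fun h' => hne (h h')
  rcases lt_or_gt_of_ne hXne with h1 | h1
  · exact absurd hab (Nat.ne_of_lt (key a b h1))
  · exact absurd hab.symm (Nat.ne_of_lt (key b a h1))

lemma rnk_measurable (X : Fin (n + 1) → Ω → ℝ) (hmeas : ∀ i, Measurable (X i))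
    (j : Fin (n + 1)) : Measurable (fun ω => rnk X j ω) := by
  have heq : (fun ω => rnk X j ω)
      = fun ω => ∑ i : Fin (n + 1), if X i ω ≤ X j ω then 1 else 0 := by
    funext ω
    unfold rnk
    rw [Finset.card_filter]
  rw [heq]
  apply Finset.measurable_sum
  intro i _
  exact Measurable.ite (measurableSet_le (hmeas i) (hmeas j)) measurable_const
    measurable_const

end RankAux

/-- Under exchangeability and almost-sure distinctness, the rank of `X (n+1)` among
`X 1, ..., X (n+1)` is uniformly distributed on `{1, ..., n+1}`. -/
theorem rank_uniform
    {Ω : Type*} [MeasurableSpace Ω] (μ : Measure Ω) [IsProbabilityMeasure μ]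
    {n : ℕ} (X : Fin (n + 1) → Ω → ℝ) (hmeas : ∀ i, Measurable (X i))
    (hexch : Exchangeable μ X)
    (hdistinct : ∀ᵐ ω ∂μ, Function.Injective (fun i => X i ω)) :
    ∀ k ∈ Finset.Icc 1 (n + 1),
      μ {ω | (Finset.univ.filter (fun i : Fin (n + 1) =>
          X i ω ≤ X (Fin.last n) ω)).card = k} = ((n : ℝ≥0∞) + 1)⁻¹ := by
  intro k hk
  -- the rank-k events
  set A : Fin (n + 1) → Set Ω := fun j => {ω | rnk X j ω = k} with hA
  have hAmeas : ∀ j, MeasurableSet (A j) := fun j =>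
    (rnk_measurable X hmeas j) (measurableSet_singleton k)
  -- Step 1: all A j have the same measure, by exchangeability.
  have hsame : ∀ j, μ (A j) = μ (A (Fin.last n)) := by
    intro j
    have hmap := hexch (Equiv.swap j (Fin.last n))
    set σ : Equiv.Perm (Fin (n + 1)) := Equiv.swap j (Fin.last n) with hσ
    -- the measurable "rank = k" set in the product space
    set S : Set (Fin (n + 1) → ℝ) :=
      {v | (Finset.univ.filter (fun i : Fin (n + 1) => v i ≤ v (Fin.last n))).card = k}
      with hS
    have hSmeas : MeasurableSet S := by
      have hm : Measurable (fun v : Fin (n + 1) → ℝ =>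
          (Finset.univ.filter (fun i : Fin (n + 1) => v i ≤ v (Fin.last n))).card) := by
        have heq : (fun v : Fin (n + 1) → ℝ =>
            (Finset.univ.filter (fun i : Fin (n + 1) => v i ≤ v (Fin.last n))).card)
            = fun v => ∑ i : Fin (n + 1), if v i ≤ v (Fin.last n) then 1 else 0 := by
          funext v
          rw [Finset.card_filter]
        rw [heq]
        apply Finset.measurable_sum
        intro i _
        exact Measurable.ite
          (measurableSet_le (measurable_pi_apply i) (measurable_pi_apply (Fin.last n)))
          measurable_const measurable_const
      exact hm (measurableSet_singleton k)
    have hvec : Measurable (fun ω (i : Fin (n + 1)) => X i ω) :=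
      measurable_pi_lambda _ (fun i => hmeas i)
    have hvecσ : Measurable (fun ω (i : Fin (n + 1)) => X (σ i) ω) :=
      measurable_pi_lambda _ (fun i => hmeas (σ i))
    have h1 : Measure.map (fun ω (i : Fin (n + 1)) => X (σ i) ω) μ S
        = Measure.map (fun ω (i : Fin (n + 1)) => X i ω) μ S := by rw [hmap]
    rw [Measure.map_apply hvecσ hSmeas, Measure.map_apply hvec hSmeas] at h1
    -- identify the two preimages
    have hcount : ∀ ω : Ω,
        (Finset.univ.filter (fun i : Fin (n + 1) =>
          X (σ i) ω ≤ X (σ (Fin.last n)) ω)).card = rnk X j ω := by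
      intro ω
      have hσlast : σ (Fin.last n) = j := Equiv.swap_apply_right j (Fin.last n)
      rw [hσlast]
      exact card_filter_perm σ (fun i => X i ω ≤ X j ω)
    have hpre1 : (fun ω (i : Fin (n + 1)) => X (σ i) ω) ⁻¹' S = A j := by
      ext ω
      simp only [Set.mem_preimage, hS, Set.mem_setOf_eq, hA, hcount ω]
    have hpre2 : (fun ω (i : Fin (n + 1)) => X i ω) ⁻¹' S = A (Fin.last n) := by
      ext ω
      simp only [Set.mem_preimage, hS, Set.mem_setOf_eq, hA, rnk]
    rw [hpre1, hpre2] at h1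
    exact h1
  -- Step 2: the distinctness set
  set D : Set Ω := {ω | Function.Injective (fun i => X i ω)} with hD
  have hDsub : MeasurableSet {ω | ∀ i j : Fin (n + 1), i ≠ j → X i ω ≠ X j ω} := by
    have heq : {ω | ∀ i j : Fin (n + 1), i ≠ j → X i ω ≠ X j ω}
        = ⋂ (i : Fin (n + 1)) (j : Fin (n + 1)) (_ : i ≠ j), {ω | X i ω = X j ω}ᶜ := by
      ext ω; simp [Set.mem_iInter]
    rw [heq]
    exact MeasurableSet.iInter fun i => MeasurableSet.iInter fun j =>
      MeasurableSet.iInter fun _ => (measurableSet_eq_fun (hmeas i) (hmeas j)).compl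
  have hDeq : D = {ω | ∀ i j : Fin (n + 1), i ≠ j → X i ω ≠ X j ω} := by
    ext ω
    simp only [hD, Set.mem_setOf_eq]
    constructor
    · intro h i j hij hXij
      exact hij (h hXij)
    · intro h i j hij
      by_contra hne
      exact h i j hne hij
  have hDmeas : MeasurableSet D := hDeq ▸ hDsub
  have hae : D ∈ ae μ := by
    filter_upwards [hdistinct] with ω hω
    exact hω
  have hDone : μ D = 1 := by
    rw [← measure_univ (μ := μ)]
    exact measure_congr (Filter.eventuallyEq_univ.mpr hae)
  -- Step 3: on D, the sets A j are pairwise disjoint and cover D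
  have hdisj : ∀ a b : Fin (n + 1), a ≠ b → Disjoint (A a ∩ D) (A b ∩ D) := by
    intro a b hab
    rw [Set.disjoint_left]
    rintro ω ⟨ha, hωD⟩ ⟨hb, _⟩
    have hinj := rnk_inj X ω hωD
    exact hab (hinj (ha.trans hb.symm))
  have hcover : D ⊆ ⋃ j : Fin (n + 1), (A j ∩ D) := by
    intro ω hωD
    have hinj := rnk_inj X ω hωD
    have himg : Finset.image (fun j => rnk X j ω) Finset.univ = Finset.Icc 1 (n + 1) := by
      apply Finset.eq_of_subset_of_card_le
      · intro m hm
        simp only [Finset.mem_image] at hm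
        obtain ⟨j, _, hj⟩ := hm
        exact hj ▸ rnk_mem X j ω
      · rw [Finset.card_image_of_injective _ hinj]
        simp [Nat.card_Icc]
    have hk' : k ∈ Finset.image (fun j => rnk X j ω) Finset.univ := himg ▸ hk
    simp only [Finset.mem_image] at hk'
    obtain ⟨j, _, hj⟩ := hk'
    exact Set.mem_iUnion.mpr ⟨j, ⟨hj, hωD⟩⟩
  -- Step 4: sum up
  have hDc : μ Dᶜ = 0 := by
    rw [measure_compl hDmeas (measure_ne_top μ D), hDone, measure_univ, tsub_self]
  have hAD : ∀ j, μ (A j ∩ D) = μ (A j) := by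
    intro j
    have h1 : μ (A j ∩ D) + μ (A j \ D) = μ (A j) := measure_inter_add_diff _ hDmeas
    have h2 : μ (A j \ D) = 0 :=
      measure_mono_null (Set.diff_subset_compl _ _) hDc
    rw [← h1, h2, add_zero]
  have hsum : ∑ j : Fin (n + 1), μ (A j ∩ D) = 1 := by
    have hmu : μ (⋃ j ∈ (Finset.univ : Finset (Fin (n + 1))), (A j ∩ D))
        = ∑ j : Fin (n + 1), μ (A j ∩ D) :=
      measure_biUnion_finset
        (by intro a _ b _ hab; exact hdisj a b hab)
        (fun b _ => (hAmeas b).inter hDmeas)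
    rw [← hmu]
    have hset : (⋃ j ∈ (Finset.univ : Finset (Fin (n + 1))), (A j ∩ D))
        = ⋃ j : Fin (n + 1), (A j ∩ D) := by
      simp
    rw [hset]
    have hle : μ (⋃ j : Fin (n + 1), (A j ∩ D)) ≤ 1 := prob_le_one
    have hge : μ D ≤ μ (⋃ j : Fin (n + 1), (A j ∩ D)) := measure_mono hcover
    rw [hDone] at hge
    exact le_antisymm hle hge
  have hsum2 : ((n : ℝ≥0∞) + 1) * μ (A (Fin.last n)) = 1 := by
    have heq : ∑ j : Fin (n + 1), μ (A j ∩ D)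
        = ∑ _j : Fin (n + 1), μ (A (Fin.last n)) := by
      apply Finset.sum_congr rfl
      intro j _
      rw [hAD j, hsame j]
    rw [heq, Finset.sum_const, Finset.card_univ, Fintype.card_fin, nsmul_eq_mul]
      at hsum
    rw [Nat.cast_add, Nat.cast_one] at hsum
    exact hsum
  have hfin : ((n : ℝ≥0∞) + 1) ≠ 0 := by simp
  have htop : ((n : ℝ≥0∞) + 1) ≠ ⊤ := by
    simp [ENNReal.add_eq_top]
  calc μ (A (Fin.last n))
      = ((n : ℝ≥0∞) + 1)⁻¹ * (((n : ℝ≥0∞) + 1) * μ (A (Fin.last n))) := by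
        rw [← mul_assoc, ENNReal.inv_mul_cancel hfin htop, one_mul]
    _ = ((n : ℝ≥0∞) + 1)⁻¹ := by rw [hsum2, mul_one]
end

section
/- Let X_1, ..., X_n, X_{n+1} be exchangeable real-valued random variables, almost surely distinct, α ∈ (0,1) with n ≥ ⌈(n+1)(1-α)⌉, and q̂ the ⌈(n+1)(1-α)⌉-th order statistic of X_1, ..., X_n. Then P(X_{n+1} ≤ q̂) ≤ 1 - α + 1/(n+1); i.e., the conformal coverage also has the matching upper bound. -/
/-
On the event that the values are distinct, `X (last n) ≤ q̂` forces the rank of `X (last n)`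
among all `n + 1` values to be at most `k = ⌈(n + 1)(1 - α)⌉`. Exchangeability makes every index
equally likely to have a given rank, and distinct values have distinct ranks, so each rank is
taken by `X (last n)` with probability at most `1 / (n + 1)`. Summing over the ranks `1, …, k`
gives `k / (n + 1) ≤ 1 - α + 1 / (n + 1)`.
-/

open MeasureTheory

open Finset Function
open scoped ENNReal

section Rank

variable {ι α : Type*} [Fintype ι] [LinearOrder α]

def rank (g : ι → α) (i : ι) : ℕ := #{j | g j ≤ g i}

lemma rank_comp_perm (g : ι → α) (σ : Equiv.Perm ι) (i : ι) :
    rank (g ∘ σ) i = rank g (σ i) := by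
  simp only [rank, card_filter, comp_apply]
  exact Equiv.sum_comp σ fun j => if g j ≤ g (σ i) then 1 else 0

lemma one_le_rank (g : ι → α) (i : ι) : 1 ≤ rank g i :=
  card_pos.2 ⟨i, by simp⟩

lemma rank_lt_rank_of_lt {g : ι → α} {i i' : ι} (h : g i < g i') : rank g i < rank g i' :=
  card_lt_card <| (ssubset_iff_of_subset fun j hj => by
    simp only [mem_filter, mem_univ, true_and] at hj ⊢; exact hj.trans h.le).2
    ⟨i', by simp, by simpa using h⟩

lemma rank_injective {g : ι → α} (hg : Injective g) : Injective (rank g) := by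
  intro i i' h
  by_contra hne
  rcases (hg.ne hne).lt_or_gt with hlt | hlt
  exacts [(rank_lt_rank_of_lt hlt).ne h, (rank_lt_rank_of_lt hlt).ne' h]

lemma rank_last_eq_card_lt_add_one {n : ℕ} {g : Fin (n + 1) → α} (hg : Injective g) :
    rank g (Fin.last n) = #{i : Fin n | g i.castSucc < g (Fin.last n)} + 1 := by
  rw [rank, card_filter, card_filter, Fin.sum_univ_castSucc, if_pos le_rfl]
  refine congrArg (· + 1) (sum_congr rfl fun i _ => if_congr ?_ rfl rfl)
  exact le_iff_lt_or_eq.trans (or_iff_left (hg.ne (Fin.castSucc_lt_last i).ne))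

end Rank

lemma List.countP_lt_le_of_le_getElem {α : Type*} [Preorder α] [DecidableLT α] {l : List α}
    (hl : l.Pairwise (· ≤ ·)) {j : ℕ} (hj : j < l.length) {x : α} (hx : x ≤ l[j]) :
    l.countP (· < x) ≤ j := by
  have hdrop : (l.drop j).countP (· < x) = 0 := by
    refine List.countP_eq_zero.2 fun y hy => ?_
    obtain ⟨i, hi, rfl⟩ := List.mem_drop_iff_getElem.1 hy
    have : l[j] ≤ l[j + i] := (List.sortedLE_iff_getElem_le_getElem_of_le.1
      (List.sortedLE_iff_pairwise.2 hl)) (Nat.le_add_right j i)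
    simpa using (hx.trans this).not_gt
  calc l.countP (· < x) = (l.take j).countP (· < x) + (l.drop j).countP (· < x) := by
        rw [← List.countP_append, List.take_append_drop]
    _ ≤ j := by
        rw [hdrop, add_zero]
        exact List.countP_le_length.trans (List.length_take_le _ _)

lemma card_lt_of_le_orderStat {n : ℕ} (f : Fin n → ℝ) {k : ℕ} (hk : 1 ≤ k) (hkn : k ≤ n) {x : ℝ}
    (hx : x ≤ orderStat f k) : #{i | f i < x} < k := by
  set l := (Multiset.map f univ.val).sort (· ≤ ·)
  have hj : k - 1 < l.length := by
    simp only [l, Multiset.length_sort, Multiset.card_map, card_val, card_univ, Fintype.card_fin]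
    omega
  rw [orderStat, List.getD_eq_getElem _ _ hj] at hx
  have hcount : l.countP (· < x) = #{i | f i < x} := by
    rw [← Multiset.coe_countP, Multiset.sort_eq, Multiset.countP_map]
    rfl
  have hle : l.countP (· < x) ≤ k - 1 :=
    List.countP_lt_le_of_le_getElem (Multiset.pairwise_sort _ _) hj hx
  omega

lemma rank_last_le_of_le_orderStat {n k : ℕ} {g : Fin (n + 1) → ℝ} (hg : Injective g)
    (hk : 1 ≤ k) (hkn : k ≤ n) (h : g (Fin.last n) ≤ orderStat (fun i => g i.castSucc) k) :
    rank g (Fin.last n) ≤ k := by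
  rw [rank_last_eq_card_lt_add_one hg]
  exact card_lt_of_le_orderStat _ hk hkn h

lemma measurable_rank {ι : Type*} [Fintype ι] (i : ι) : Measurable fun v : ι → ℝ => rank v i := by
  simp only [rank, card_filter]
  exact Finset.measurable_sum _ fun j _ => Measurable.ite
    (measurableSet_le (measurable_pi_apply j) (measurable_pi_apply i)) measurable_const
    measurable_const

lemma ENNReal.natCeil_mul_div_le {N : ℕ} (hN : 0 < N) {t : ℝ} (ht : 0 ≤ t) :
    (⌈(N : ℝ) * t⌉₊ : ℝ≥0∞) / N ≤ ENNReal.ofReal (t + 1 / N) := by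
  have hN' : (0 : ℝ) < N := Nat.cast_pos.2 hN
  rw [← ENNReal.ofReal_natCast, ← ENNReal.ofReal_natCast N, ← ENNReal.ofReal_div_of_pos hN']
  refine ENNReal.ofReal_le_ofReal ?_
  rw [div_le_iff₀ hN', add_mul, one_div_mul_cancel hN'.ne', mul_comm]
  exact (Nat.ceil_lt_add_one (by positivity)).le

section Exchangeable

variable {Ω : Type*} [MeasurableSpace Ω] {μ : Measure Ω} {n : ℕ} {X : Fin n → Ω → ℝ}

lemma measurableSet_rank_eq (hmeas : ∀ i, Measurable (X i)) (i : Fin n) (m : ℕ) :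
    MeasurableSet {ω | rank (X · ω) i = m} :=
  (measurable_rank i).comp (measurable_pi_lambda _ hmeas) (measurableSet_singleton m)

lemma Exchangeable.measure_rank_eq (hX : Exchangeable μ X) (hmeas : ∀ i, Measurable (X i))
    (i j : Fin n) (m : ℕ) : μ {ω | rank (X · ω) i = m} = μ {ω | rank (X · ω) j = m} := by
  have hS : MeasurableSet {v : Fin n → ℝ | rank v j = m} :=
    measurable_rank j (measurableSet_singleton m)
  have hpre : {ω | rank (X · ω) i = m} =
      (fun ω k => X (Equiv.swap i j k) ω) ⁻¹' {v | rank v j = m} := by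
    ext ω
    show rank (X · ω) i = m ↔ rank ((X · ω) ∘ Equiv.swap i j) j = m
    rw [rank_comp_perm, Equiv.swap_apply_right]
  rw [hpre, ← Measure.map_apply (by fun_prop) hS, hX, Measure.map_apply (by fun_prop) hS]
  rfl

lemma Exchangeable.measure_rank_eq_le_inv [IsProbabilityMeasure μ] (hX : Exchangeable μ X)
    (hmeas : ∀ i, Measurable (X i)) (hdistinct : ∀ᵐ ω ∂μ, Injective (X · ω))
    (i : Fin n) (m : ℕ) : μ {ω | rank (X · ω) i = m} ≤ (n : ℝ≥0∞)⁻¹ := by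
  have hdisj : Set.Pairwise (univ : Finset (Fin n))
      (AEDisjoint μ on fun j => {ω | rank (X · ω) j = m}) := by
    intro j _ j' _ hne
    refine measure_mono_null ?_ (ae_iff.1 hdistinct)
    rintro ω ⟨hj, hj'⟩ hinj
    exact hne (rank_injective hinj (hj.trans hj'.symm))
  have hsum := sum_measure_le_measure_univ
    (fun j _ => (measurableSet_rank_eq hmeas j m).nullMeasurableSet) hdisj
  simp only [hX.measure_rank_eq hmeas _ i, sum_const, card_univ, Fintype.card_fin, nsmul_eq_mul,
    measure_univ] at hsum
  rwa [ENNReal.le_inv_iff_mul_le, mul_comm]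

end Exchangeable

/-- Upper bound for conformal coverage: under exchangeability and a.s. distinct values,
coverage is at most `1 - α + 1/(n+1)`. -/
theorem conformal_coverage_upper
    {Ω : Type*} [MeasurableSpace Ω] (μ : Measure Ω) [IsProbabilityMeasure μ]
    {n : ℕ} (X : Fin (n + 1) → Ω → ℝ) (hmeas : ∀ i, Measurable (X i))
    (hexch : Exchangeable μ X)
    (hdistinct : ∀ᵐ ω ∂μ, Function.Injective (fun i => X i ω))
    (α : ℝ) (hα : α ∈ Set.Ioo (0 : ℝ) 1)
    (hidx : ⌈((n : ℝ) + 1) * (1 - α)⌉₊ ≤ n) :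
    μ {ω | X (Fin.last n) ω ≤
        orderStat (fun i : Fin n => X i.castSucc ω) ⌈((n : ℝ) + 1) * (1 - α)⌉₊} ≤
      ENNReal.ofReal (1 - α + 1 / ((n : ℝ) + 1)) := by
  set k := ⌈((n : ℝ) + 1) * (1 - α)⌉₊
  have hk : 1 ≤ k := Nat.ceil_pos.2 <| mul_pos (by positivity) (sub_pos.2 hα.2)
  have hcover : {ω | X (Fin.last n) ω ≤ orderStat (fun i : Fin n => X i.castSucc ω) k}
      ≤ᵐ[μ] ⋃ m ∈ Icc 1 k, {ω | rank (X · ω) (Fin.last n) = m} := by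
    filter_upwards [hdistinct] with ω hinj hω
    exact Set.mem_biUnion (mem_Icc.2 ⟨one_le_rank _ _,
      rank_last_le_of_le_orderStat hinj hk hidx hω⟩) rfl
  calc _ ≤ μ (⋃ m ∈ Icc 1 k, {ω | rank (X · ω) (Fin.last n) = m}) := measure_mono_ae hcover
    _ ≤ ∑ m ∈ Icc 1 k, μ {ω | rank (X · ω) (Fin.last n) = m} := measure_biUnion_finset_le _ _
    _ ≤ ∑ m ∈ Icc 1 k, ((n + 1 : ℕ) : ℝ≥0∞)⁻¹ := sum_le_sum fun m _ =>
        hexch.measure_rank_eq_le_inv hmeas hdistinct _ m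
    _ = (k : ℝ≥0∞) / (n + 1 : ℕ) := by simp [div_eq_mul_inv]
    _ ≤ ENNReal.ofReal (1 - α + 1 / ((n : ℝ) + 1)) := by
        simpa using ENNReal.natCeil_mul_div_le n.succ_pos (sub_nonneg.2 hα.2.le)
end

section
/- Let X_1, ..., X_{n+1} be exchangeable and almost surely distinct. Then for each j ∈ {1, ..., n}, P(X_{n+1} ≤ X_{(j)}) = j/(n+1), where X_{(j)} denotes the j-th smallest of X_1, ..., X_n. -/
open MeasureTheory
open scoped ENNReal

namespace ExactCov

noncomputable def rk {n : ℕ} (v : Fin n → ℝ) (k : Fin n) : ℕ :=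
  (Finset.univ.filter fun i => v i ≤ v k).card

lemma rk_eq_sum {n : ℕ} (v : Fin n → ℝ) (k : Fin n) :
    rk v k = ∑ i : Fin n, if v i ≤ v k then 1 else 0 := by
  rw [rk, Finset.card_filter]

lemma measurable_rk {n : ℕ} (k : Fin n) :
    Measurable fun v : Fin n → ℝ => rk v k := by
  simp only [rk_eq_sum]
  exact Finset.measurable_sum _ fun i _ =>
    Measurable.ite (measurableSet_le (measurable_pi_apply i) (measurable_pi_apply k))
      measurable_const measurable_const

lemma rk_pos {n : ℕ} (v : Fin n → ℝ) (k : Fin n) : 1 ≤ rk v k :=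
  Finset.card_pos.mpr ⟨k, by simp⟩

lemma rk_le {n : ℕ} (v : Fin n → ℝ) (k : Fin n) : rk v k ≤ n :=
  le_trans (Finset.card_filter_le _ _) (by simp)

lemma rk_lt_of_lt {n : ℕ} {v : Fin n → ℝ} {k k' : Fin n} (hlt : v k < v k') :
    rk v k < rk v k' := by
  apply Finset.card_lt_card
  refine ⟨fun i hi => ?_, fun hc => ?_⟩
  · simp only [Finset.mem_filter, Finset.mem_univ, true_and] at hi ⊢
    exact hi.trans hlt.le
  · have := hc (by simp : k' ∈ Finset.univ.filter (fun i => v i ≤ v k'))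
    simp only [Finset.mem_filter, Finset.mem_univ, true_and] at this
    exact absurd this (not_le.2 hlt)

lemma rk_inj {n : ℕ} {v : Fin n → ℝ} (hv : Function.Injective v) :
    Function.Injective (rk v) := by
  intro k k' h
  rcases lt_trichotomy (v k) (v k') with hlt | heq | hlt
  · exact absurd h (rk_lt_of_lt hlt).ne
  · exact hv heq
  · exact absurd h.symm (rk_lt_of_lt hlt).ne

lemma rk_surj {n : ℕ} {v : Fin n → ℝ} (hv : Function.Injective v) {r : ℕ}
    (hr : r ∈ Finset.Icc 1 n) : ∃ k, rk v k = r := by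
  have himg : Finset.univ.image (rk v) = Finset.Icc 1 n := by
    apply Finset.eq_of_subset_of_card_le
    · intro r' hr'
      simp only [Finset.mem_image, Finset.mem_univ, true_and] at hr'
      obtain ⟨k, hk⟩ := hr'
      subst hk
      exact Finset.mem_Icc.2 ⟨rk_pos v k, rk_le v k⟩
    · rw [Finset.card_image_of_injective _ (rk_inj hv)]
      simp [Nat.card_Icc]
  rw [← himg] at hr
  simpa using hr

lemma rk_comp_perm {n : ℕ} (v : Fin n → ℝ) (σ : Equiv.Perm (Fin n)) (k : Fin n) :
    rk (fun i => v (σ i)) k = rk v (σ k) := by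
  rw [rk_eq_sum, rk_eq_sum, ← Equiv.sum_comp σ (fun i => if v i ≤ v (σ k) then 1 else 0)]

lemma sorted_getD_lt {l : List ℝ} (h : l.Pairwise (· ≤ ·)) :
    ∀ {k : ℕ}, k < l.length → ∀ x : ℝ,
      (l.getD k 0 < x ↔ k < l.countP (fun a => decide (a < x))) := by
  induction l with
  | nil => intro k hk; simp at hk
  | cons a t ih =>
    rw [List.pairwise_cons] at h
    intro k hk x
    cases k with
    | zero =>
      simp only [List.getD_cons_zero, List.countP_cons]
      constructor
      · intro ha
        simp [ha]
      · intro hpos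
        by_contra ha
        have ht : t.countP (fun a => decide (a < x)) = 0 := by
          rw [List.countP_eq_zero]
          intro b hb
          simp only [decide_eq_true_eq]
          exact fun hbx => ha (lt_of_le_of_lt (h.1 b hb) hbx)
        simp [ht, ha] at hpos
    | succ m =>
      simp only [List.getD_cons_succ, List.countP_cons]
      have hm : m < t.length := by simpa using hk
      by_cases ha : a < x
      · rw [ih h.2 hm x]
        simp [ha]
      · have ht : t.countP (fun a => decide (a < x)) = 0 := by
          rw [List.countP_eq_zero]
          intro b hb
          simp only [decide_eq_true_eq]
          exact fun hbx => ha (lt_of_le_of_lt (h.1 b hb) hbx)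
        have hge : ¬ t.getD m 0 < x := by
          intro hlt
          have := (ih h.2 hm x).1 hlt
          omega
        have hz : (if decide (a < x) = true then 1 else 0) = 0 := by simp [ha]
        rw [ht, hz]
        exact iff_of_false hge (by omega)

lemma le_orderStat_iff {n : ℕ} (f : Fin n → ℝ) {j : ℕ} (h1 : 1 ≤ j) (hn : j ≤ n) (x : ℝ) :
    x ≤ orderStat f j ↔ (Finset.univ.filter fun i => f i < x).card < j := by
  set l := (Multiset.map f Finset.univ.val).sort (· ≤ ·) with hl
  have hsort : l.Pairwise (· ≤ ·) := Multiset.pairwise_sort _ _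
  have hlen : l.length = n := by simp [hl]
  have hk : j - 1 < l.length := by omega
  have hcount : l.countP (fun a => decide (a < x)) =
      (Finset.univ.filter fun i => f i < x).card := by
    have hml : (l : Multiset ℝ) = Multiset.map f Finset.univ.val := Multiset.sort_eq _ _
    have h1' : Multiset.countP (fun a : ℝ => a < x) (l : Multiset ℝ) =
        l.countP (fun a => decide (a < x)) := Multiset.coe_countP _ l
    rw [← h1', hml, Multiset.countP_map]
    rw [Finset.card_def, Finset.filter_val]
  rw [orderStat, ← hl, ← not_lt, sorted_getD_lt hsort hk x, hcount, not_lt]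
  constructor <;> intro <;> omega

lemma rk_last {n : ℕ} {v : Fin (n + 1) → ℝ} (hv : Function.Injective v) :
    rk v (Fin.last n) =
      (Finset.univ.filter fun i : Fin n => v i.castSucc < v (Fin.last n)).card + 1 := by
  rw [rk_eq_sum, Fin.sum_univ_castSucc, Finset.card_filter]
  simp only [le_refl, if_true]
  congr 1
  apply Finset.sum_congr rfl
  intro i _
  have hne : v i.castSucc ≠ v (Fin.last n) := hv.ne (Fin.castSucc_lt_last i).ne
  exact if_congr ⟨fun hle => lt_of_le_of_ne hle hne, le_of_lt⟩ rfl rfl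

end ExactCov

/-- Exact coverage of order-statistic thresholds: for exchangeable, a.s. distinct scores,
`P(X (n+1) ≤ X_{(j)}) = j / (n+1)` for each `j ∈ {1, ..., n}`. -/
theorem exact_order_stat_coverage
    {Ω : Type*} [MeasurableSpace Ω] (μ : Measure Ω) [IsProbabilityMeasure μ]
    {n : ℕ} (X : Fin (n + 1) → Ω → ℝ) (hmeas : ∀ i, Measurable (X i))
    (hexch : Exchangeable μ X)
    (hdistinct : ∀ᵐ ω ∂μ, Function.Injective (fun i => X i ω)) :
    ∀ j ∈ Finset.Icc 1 n,
      μ {ω | X (Fin.last n) ω ≤ orderStat (fun i : Fin n => X i.castSucc ω) j} =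
        (j : ℝ≥0∞) / ((n : ℝ≥0∞) + 1) := by
  intro j hj
  rw [Finset.mem_Icc] at hj
  have hVmeas : Measurable (fun ω i => X i ω : Ω → Fin (n + 1) → ℝ) :=
    measurable_pi_lambda _ hmeas
  set V : Ω → Fin (n + 1) → ℝ := fun ω i => X i ω with hV
  set R : Fin (n + 1) → Ω → ℕ := fun k ω => ExactCov.rk (V ω) k with hR
  have hRmeas : ∀ k r, MeasurableSet {ω | R k ω = r} := fun k r =>
    (ExactCov.measurable_rk k).comp hVmeas (measurableSet_singleton r)
  -- the injectivity set
  have hGnull : μ {ω | Function.Injective (V ω)}ᶜ = 0 := by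
    rw [Set.compl_setOf]
    exact MeasureTheory.ae_iff.1 hdistinct
  have hGmeas : MeasurableSet {ω | Function.Injective (V ω)} := by
    have heq : {ω | Function.Injective (V ω)} =
        ⋂ (i : Fin (n + 1)) (i' : Fin (n + 1)), {ω | V ω i = V ω i' → i = i'} := by
      ext ω
      simp only [Set.mem_setOf_eq, Set.mem_iInter]
      exact ⟨fun h i i' => @h i i', fun h a b => h a b⟩
    rw [heq]
    refine MeasurableSet.iInter fun i => MeasurableSet.iInter fun i' => ?_
    by_cases hii : i = i'
    · subst hii; simp
    · have he : {ω | V ω i = V ω i' → i = i'} = {ω | V ω i = V ω i'}ᶜ := by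
        ext ω; simp [hii]
      rw [he]
      exact (measurableSet_eq_fun (hmeas i) (hmeas i')).compl
  -- Step 1: a.e. event identification
  have hset : μ {ω | X (Fin.last n) ω ≤ orderStat (fun i : Fin n => X i.castSucc ω) j} =
      μ {ω | R (Fin.last n) ω ≤ j} := by
    apply measure_congr
    filter_upwards [hdistinct] with ω hω
    have h1 : X (Fin.last n) ω ≤ orderStat (fun i : Fin n => X i.castSucc ω) j ↔
        (Finset.univ.filter fun i : Fin n => X i.castSucc ω < X (Fin.last n) ω).card < j :=
      ExactCov.le_orderStat_iff _ hj.1 hj.2 _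
    have h2 : ExactCov.rk (V ω) (Fin.last n) =
        (Finset.univ.filter fun i : Fin n => X i.castSucc ω < X (Fin.last n) ω).card + 1 :=
      ExactCov.rk_last hω
    show (_ ≤ _) = _
    rw [eq_iff_iff, h1]
    show _ ↔ ExactCov.rk (V ω) (Fin.last n) ≤ j
    rw [h2]
    omega
  -- Step 2: the key uniform-rank fact
  have hrank : ∀ r ∈ Finset.Icc 1 (n + 1),
      μ {ω | R (Fin.last n) ω = r} = 1 / ((n : ℝ≥0∞) + 1) := by
    intro r hr
    -- (a) exchangeability: all k give the same measure
    have hmapV : ∀ k : Fin (n + 1),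
        μ {ω | R k ω = r} = μ {ω | R (Fin.last n) ω = r} := by
      intro k
      have hS : MeasurableSet {v : Fin (n + 1) → ℝ | ExactCov.rk v k = r} :=
        ExactCov.measurable_rk k (measurableSet_singleton r)
      have h1 : μ {ω | R k ω = r} = Measure.map V μ {v | ExactCov.rk v k = r} := by
        rw [Measure.map_apply hVmeas hS]; rfl
      have hVσ : Measurable fun ω i => X ((Equiv.swap k (Fin.last n)) i) ω :=
        measurable_pi_lambda _ fun i => hmeas _
      rw [h1, ← hexch (Equiv.swap k (Fin.last n)), Measure.map_apply hVσ hS]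
      congr 1
      ext ω
      simp only [Set.mem_setOf_eq, Set.mem_preimage]
      have := ExactCov.rk_comp_perm (V ω) (Equiv.swap k (Fin.last n)) k
      rw [Equiv.swap_apply_left] at this
      rw [show (fun i => X ((Equiv.swap k (Fin.last n)) i) ω) =
        (fun i => V ω ((Equiv.swap k (Fin.last n)) i)) from rfl, this]
    -- (b) a.e. partition: exactly one k attains rank r
    have hpart : ∑ k : Fin (n + 1), μ {ω | R k ω = r} = 1 := by
      have hinter : ∀ k : Fin (n + 1),
          μ ({ω | R k ω = r} ∩ {ω | Function.Injective (V ω)}) = μ {ω | R k ω = r} :=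
        fun k => measure_inter_conull hGnull
      calc ∑ k : Fin (n + 1), μ {ω | R k ω = r}
          = ∑ k : Fin (n + 1), μ ({ω | R k ω = r} ∩ {ω | Function.Injective (V ω)}) := by
            simp only [hinter]
        _ = μ (⋃ k ∈ (Finset.univ : Finset (Fin (n + 1))),
              ({ω | R k ω = r} ∩ {ω | Function.Injective (V ω)})) := by
            rw [measure_biUnion_finset ?_ ?_]
            · intro k _ k' _ hkk'
              rw [Function.onFun, Set.disjoint_left]
              rintro ω ⟨hk, hinj⟩ ⟨hk', _⟩
              exact hkk' (ExactCov.rk_inj hinj (hk.trans hk'.symm))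
            · exact fun k _ => (hRmeas k r).inter hGmeas
        _ = μ {ω | Function.Injective (V ω)} := by
            congr 1
            ext ω
            simp only [Set.mem_iUnion, Finset.mem_univ, Set.mem_inter_iff,
              Set.mem_setOf_eq, true_and, exists_prop]
            constructor
            · rintro ⟨k, _, hinj⟩; exact hinj
            · intro hinj
              obtain ⟨k, hk⟩ := ExactCov.rk_surj hinj hr
              exact ⟨k, hk, hinj⟩
        _ = 1 := by
            have := measure_add_measure_compl (μ := μ) (s := {ω | Function.Injective (V ω)}) ?_
            · rw [hGnull, add_zero] at this; rw [this, measure_univ]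
            · exact hGmeas
    -- combine
    rw [Finset.sum_congr rfl (fun k _ => hmapV k)] at hpart
    rw [Finset.sum_const, Finset.card_univ, Fintype.card_fin, nsmul_eq_mul] at hpart
    have hne : ((n : ℝ≥0∞) + 1) ≠ 0 := by simp [add_eq_zero]
    rw [ENNReal.eq_div_iff hne (by finiteness)]
    have hc : ((n : ℝ≥0∞) + 1) = ((n + 1 : ℕ) : ℝ≥0∞) := by push_cast; ring
    rw [hc]
    exact hpart
  -- Step 3: decompose the event by rank values
  have hunion : {ω | R (Fin.last n) ω ≤ j} =
      ⋃ r ∈ Finset.Icc 1 j, {ω | R (Fin.last n) ω = r} := by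
    ext ω
    simp only [Set.mem_setOf_eq, Set.mem_iUnion, Finset.mem_Icc, exists_prop]
    constructor
    · intro h
      exact ⟨R (Fin.last n) ω, ⟨ExactCov.rk_pos _ _, h⟩, rfl⟩
    · rintro ⟨r, ⟨h1, h2⟩, hreq⟩
      omega
  rw [hset, hunion, measure_biUnion_finset ?_ (fun r _ => hRmeas _ r)]
  · have : ∀ r ∈ Finset.Icc 1 j, μ {ω | R (Fin.last n) ω = r} = 1 / ((n : ℝ≥0∞) + 1) :=
      fun r hrm => hrank r (by rw [Finset.mem_Icc] at hrm ⊢; omega)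
    rw [Finset.sum_congr rfl this, Finset.sum_const, Nat.card_Icc, nsmul_eq_mul]
    simp only [Nat.add_sub_cancel]
    rw [ENNReal.div_eq_inv_mul, ENNReal.div_eq_inv_mul, ← mul_assoc, mul_comm ((j:ℝ≥0∞)),
      mul_assoc, mul_one]
  · intro r _ r' _ hrr'
    rw [Function.onFun, Set.disjoint_left]
    rintro ω h h'
    exact hrr' (h.symm.trans h')
end
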